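/- Let S ⊆ K be a compact set. Then co_Φ(S) = co_Φ(Ext_Φ(S)). In particular, if C ⊆ K is compact and is a convex-trace set with respect to Φ, then C = co_Φ(Ext_Φ(C)); that is, a compact Φ-convex-trace set is the Φ-trace convex hull of its Φ-extreme points. -/

import Mathlib

open MeasureTheory Set

section Defs

variable {K : Type*} [TopologicalSpace K] [CompactSpace K]

/-- The canonical injection `δ^Φ : K → Φ*`, `δ^Φ(x)(φ) = φ(x)`. -/
noncomputable def deltaPhi (Φ : Submodule ℝ C(K, ℝ)) (x : K) : WeakDual ℝ ↥Φ :=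
  (ContinuousMap.evalCLM ℝ x).comp Φ.subtypeL

/-- The set `K(Φ) = {Q ∈ Φ* : ‖Q‖ = Q(𝟏) = 1}`. -/
noncomputable def KPhi (Φ : Submodule ℝ C(K, ℝ))
    (h1 : ContinuousMap.const K (1 : ℝ) ∈ Φ) : Set (WeakDual ℝ ↥Φ) :=
  {Q | @Norm.norm (StrongDual ℝ ↥Φ) (@ContinuousLinearMap.hasOpNorm ℝ ℝ ↥Φ ℝ _ _ _ _ _ _ _)
    (WeakDual.toStrongDual Q) = 1 ∧ Q ⟨ContinuousMap.const K (1 : ℝ), h1⟩ = 1}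

end Defs

section DefsTC

variable {K : Type*} [TopologicalSpace K] [CompactSpace K]

/-- A closed set `C ⊆ K` is convex-trace w.r.t. `Φ` if `δ^Φ(C) = δ^Φ(K) ∩ Ĉ` for some
weak*-closed convex subset `Ĉ` of `K(Φ)`. -/
def TraceConvexSet (Φ : Submodule ℝ C(K, ℝ)) (h1 : ContinuousMap.const K (1 : ℝ) ∈ Φ)
    (C : Set K) : Prop :=
  IsClosed C ∧ ∃ Ch : Set (WeakDual ℝ ↥Φ), Ch ⊆ KPhi Φ h1 ∧ IsClosed Ch ∧ Convex ℝ Ch ∧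
    deltaPhi Φ '' C = deltaPhi Φ '' Set.univ ∩ Ch

end DefsTC

section DefsHull

variable {K : Type*} [TopologicalSpace K] [CompactSpace K]

/-- The `Φ`-trace convexification of `S`: the intersection of all convex-trace subsets of `K`
containing `S`. -/
def traceCoHull (Φ : Submodule ℝ C(K, ℝ)) (h1 : ContinuousMap.const K (1 : ℝ) ∈ Φ)
    (S : Set K) : Set K :=
  ⋂₀ {C : Set K | TraceConvexSet Φ h1 C ∧ S ⊆ C}

end DefsHull

section DefsExt

variable {K : Type*} [TopologicalSpace K] [CompactSpace K]

/-- `Ext_Φ(S)`: the `Φ`-extreme points of `S`, i.e. the points `x ∈ S` such that `δ^Φ(x)` is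
an extreme point of the weak*-closed convex hull of `δ^Φ(S)`. -/
def ExtPhi (Φ : Submodule ℝ C(K, ℝ)) (S : Set K) : Set K :=
  {x | x ∈ S ∧
    deltaPhi Φ x ∈ Set.extremePoints ℝ (closure (convexHull ℝ (deltaPhi Φ '' S)))}

end DefsExt

/-!
Let `D` be the weak*-closed convex hull of `δ^Φ(S)`; it lies in the polar of the unit ball, hence
is compact by Banach–Alaoglu. By Milman's converse to the Krein–Milman theorem every extreme point
of `D` lies in the compact set `δ^Φ(S)`, i.e. it is `δ^Φ(y)` for some `y ∈ Ext_Φ(S)`. So if a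
convex-trace set `C = (δ^Φ)⁻¹(Ĉ)` contains `Ext_Φ(S)`, then `Ĉ` contains the extreme points of `D`,
hence `D` itself by Krein–Milman, hence `δ^Φ(S)`, and `S ⊆ C`.
-/

open Filter Topology

section ConvexHullCompact

variable {E : Type*} [AddCommGroup E] [Module ℝ E] [TopologicalSpace E]
  [IsTopologicalAddGroup E] [ContinuousSMul ℝ E]

theorem IsCompact.convexJoin {s t : Set E} (hs : IsCompact s) (ht : IsCompact t) :
    IsCompact (_root_.convexJoin ℝ s t) := by
  have : _root_.convexJoin ℝ s t =
      (fun p : E × E × ℝ => AffineMap.lineMap p.1 p.2.1 p.2.2) '' s ×ˢ t ×ˢ Icc 0 1 := by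
    ext x
    simp [mem_convexJoin, segment_eq_image_lineMap, and_assoc]
  rw [this]
  exact (hs.prod (ht.prod isCompact_Icc)).image (by fun_prop)

theorem isCompact_convexHull_union {s t : Set E} (hs : IsCompact s) (ht : IsCompact t)
    (hsc : Convex ℝ s) (htc : Convex ℝ t) : IsCompact (convexHull ℝ (s ∪ t)) := by
  rcases s.eq_empty_or_nonempty with rfl | hs₀
  · simpa [htc.convexHull_eq] using ht
  rcases t.eq_empty_or_nonempty with rfl | ht₀
  · simpa [hsc.convexHull_eq] using hs
  rw [hsc.convexHull_union htc hs₀ ht₀]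
  exact hs.convexJoin ht

theorem isCompact_convexHull_biUnion {ι : Type*} (I : Finset ι) {s : ι → Set E}
    (hs : ∀ i ∈ I, IsCompact (s i)) (hsc : ∀ i ∈ I, Convex ℝ (s i)) :
    IsCompact (convexHull ℝ (⋃ i ∈ I, s i)) := by
  classical
  induction I using Finset.induction with
  | empty => simp
  | insert a I _ ih =>
    simp only [Finset.forall_mem_insert] at hs hsc
    rw [Finset.set_biUnion_insert, ← convexHull_convexHull_union_right]
    exact isCompact_convexHull_union hs.1 (ih hs.2 hsc.2) hsc.1 (convex_convexHull ℝ _)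

end ConvexHullCompact

section Milman

variable {E : Type*} [AddCommGroup E] [Module ℝ E] [TopologicalSpace E]
  [IsTopologicalAddGroup E] [ContinuousSMul ℝ E] [LocallyConvexSpace ℝ E]

theorem exists_isClosed_convex_nhds_zero_subset {U : Set E} (hU : U ∈ 𝓝 0) :
    ∃ W ∈ 𝓝 (0 : E), IsClosed W ∧ Convex ℝ W ∧ W ⊆ U := by
  obtain ⟨V, hV, hVc, hVU⟩ := exists_mem_nhds_isClosed_subset hU
  obtain ⟨W, ⟨hW, hWc⟩, hWV⟩ := (LocallyConvexSpace.convex_basis_zero ℝ E).mem_iff.1 hV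
  exact ⟨closure W, mem_of_superset hW subset_closure, isClosed_closure, hWc.closure,
    (closure_minimal hWV hVc).trans hVU⟩

/-- **Milman's theorem**, a converse to the Krein–Milman theorem. -/
theorem extremePoints_closure_convexHull_subset [T2Space E] {t : Set E} (ht : IsCompact t)
    (hD : IsCompact (closure (convexHull ℝ t))) :
    extremePoints ℝ (closure (convexHull ℝ t)) ⊆ t := by
  intro x hx
  rw [← ht.isClosed.closure_eq, mem_closure_iff_nhds_zero]
  intro U hU
  obtain ⟨W, hW, hWc, hWconv, hWU⟩ :=
    exists_isClosed_convex_nhds_zero_subset (neg_mem_nhds_zero E hU)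
  -- The closed convex hulls of finitely many pieces `t ∩ (y + W)` are compact, so `D` is the
  -- convex hull of their union; the extreme point `x` must then lie in one of them.
  obtain ⟨T, hTt, hcover⟩ := ht.elim_nhds_subcover (fun y => (fun z => -y + z) ⁻¹' W)
    fun y _ => (continuous_const_add (-y)).continuousAt.preimage_mem_nhds (by simpa using hW)
  set piece := fun y => closure (convexHull ℝ (t ∩ (fun z => -y + z) ⁻¹' W))
  have hpiece : ∀ y, piece y ⊆ closure (convexHull ℝ t) := fun y =>
    closure_mono (convexHull_mono inter_subset_left)
  have hcompact : IsCompact (convexHull ℝ (⋃ y ∈ T, piece y)) :=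
    isCompact_convexHull_biUnion T (fun y _ => hD.of_isClosed_subset isClosed_closure (hpiece y))
      fun y _ => (convex_convexHull ℝ _).closure
  have hD_eq : closure (convexHull ℝ t) = convexHull ℝ (⋃ y ∈ T, piece y) := by
    refine subset_antisymm (closure_minimal (convexHull_mono fun z hz => ?_) hcompact.isClosed)
      (convexHull_min (iUnion₂_subset fun y _ => hpiece y) (convex_convexHull ℝ t).closure)
    obtain ⟨y, hyT, hzy⟩ := mem_iUnion₂.1 (hcover hz)
    exact mem_iUnion₂.2 ⟨y, hyT, subset_closure (subset_convexHull ℝ _ ⟨hz, hzy⟩)⟩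
  rw [hD_eq] at hx
  obtain ⟨y, hyT, hxy⟩ := mem_iUnion₂.1 (extremePoints_convexHull_subset hx)
  have hxW : -y + x ∈ W := closure_minimal
    (convexHull_min inter_subset_right (hWconv.translate_preimage_right (-y)))
    (hWc.preimage (continuous_const_add (-y))) hxy
  exact ⟨y, hTt y hyT, by simpa [neg_add_eq_sub] using hWU hxW⟩

theorem IsCompact.subset_of_extremePoints_subset [T2Space E] {s C : Set E} (hs : IsCompact s)
    (hsc : Convex ℝ s) (hC : IsClosed C) (hCc : Convex ℝ C) (h : extremePoints ℝ s ⊆ C) :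
    s ⊆ C := by
  rw [← closure_convexHull_extremePoints hs hsc]
  exact closure_minimal (convexHull_min h hCc) hC

end Milman

theorem WeakDual.convex_polar (E : Type*) [NormedAddCommGroup E] [NormedSpace ℝ E]
    (s : Set E) : Convex ℝ (WeakDual.polar ℝ s) :=
  (LinearMap.polar_AbsConvex (B := (topDualPairing ℝ E).flip) s).2

instance WeakDual.instLocallyConvexSpace (E : Type*) [AddCommGroup E] [Module ℝ E]
    [TopologicalSpace E] :
    LocallyConvexSpace ℝ (WeakDual ℝ E) := by
  exact WeakBilin.locallyConvexSpace (B := topDualPairing ℝ E)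

section TraceConvex

variable {K : Type*} [TopologicalSpace K] {Φ : Submodule ℝ C(K, ℝ)}

theorem continuous_deltaPhi : Continuous (deltaPhi Φ) :=
  WeakBilin.continuous_of_continuous_eval _ fun φ => (φ : C(K, ℝ)).continuous

theorem deltaPhi_injective (hsep : ∀ x y : K, x ≠ y → ∃ φ ∈ Φ, φ x ≠ φ y) :
    Function.Injective (deltaPhi Φ) := by
  intro x y h
  by_contra hxy
  obtain ⟨φ, hφ, hne⟩ := hsep x y hxy
  exact hne (congrArg (fun Q : WeakDual ℝ Φ => Q ⟨φ, hφ⟩) h)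

variable [CompactSpace K]

theorem deltaPhi_mem_polar_closedBall (x : K) :
    deltaPhi Φ x ∈ WeakDual.polar ℝ (Metric.closedBall (0 : Φ) 1) := by
  rw [WeakDual.polar_def]
  intro φ hφ
  exact ((φ : C(K, ℝ)).norm_coe_le_norm x).trans (mem_closedBall_zero_iff.1 hφ)

theorem isCompact_closure_convexHull_image_deltaPhi (S : Set K) :
    IsCompact (closure (convexHull ℝ (deltaPhi Φ '' S))) := by
  have hB := WeakDual.isCompact_polar ℝ (Metric.closedBall_mem_nhds (0 : Φ) one_pos)
  refine hB.of_isClosed_subset isClosed_closure (closure_minimal ?_ hB.isClosed)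
  exact convexHull_min (image_subset_iff.2 fun x _ => deltaPhi_mem_polar_closedBall x)
    (WeakDual.convex_polar Φ _)

theorem extremePoints_closure_convexHull_image_deltaPhi_subset {S : Set K} (hS : IsCompact S) :
    extremePoints ℝ (closure (convexHull ℝ (deltaPhi Φ '' S))) ⊆ deltaPhi Φ '' ExtPhi Φ S := by
  -- `E` is given explicitly: unifying it against the goal instead is prohibitively slow.
  have hmilman : extremePoints ℝ (closure (convexHull ℝ (deltaPhi Φ '' S))) ⊆ deltaPhi Φ '' S :=
    extremePoints_closure_convexHull_subset (E := WeakDual ℝ Φ) (hS.image continuous_deltaPhi)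
      (isCompact_closure_convexHull_image_deltaPhi S)
  intro Q hQ
  obtain ⟨y, hyS, rfl⟩ := hmilman hQ
  exact ⟨y, ⟨hyS, hQ⟩, rfl⟩

variable {h1 : ContinuousMap.const K (1 : ℝ) ∈ Φ}

theorem TraceConvexSet.exists_eq_preimage (hsep : ∀ x y : K, x ≠ y → ∃ φ ∈ Φ, φ x ≠ φ y)
    {C : Set K} (hC : TraceConvexSet Φ h1 C) :
    ∃ Ch : Set (WeakDual ℝ Φ), IsClosed Ch ∧ Convex ℝ Ch ∧ C = deltaPhi Φ ⁻¹' Ch := by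
  obtain ⟨-, Ch, -, hChc, hChconv, hCh⟩ := hC
  refine ⟨Ch, hChc, hChconv, ?_⟩
  rw [← (deltaPhi_injective hsep).preimage_image C, hCh, image_univ, preimage_inter,
    preimage_range, univ_inter]

theorem TraceConvexSet.subset_of_extPhi_subset (hsep : ∀ x y : K, x ≠ y → ∃ φ ∈ Φ, φ x ≠ φ y)
    {C S : Set K} (hC : TraceConvexSet Φ h1 C) (hS : IsCompact S) (hext : ExtPhi Φ S ⊆ C) :
    S ⊆ C := by
  obtain ⟨Ch, hChc, hChconv, rfl⟩ := hC.exists_eq_preimage hsep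
  have hextCh : extremePoints ℝ (closure (convexHull ℝ (deltaPhi Φ '' S))) ⊆ Ch :=
    (extremePoints_closure_convexHull_image_deltaPhi_subset hS).trans (image_subset_iff.2 hext)
  have hD : closure (convexHull ℝ (deltaPhi Φ '' S)) ⊆ Ch :=
    IsCompact.subset_of_extremePoints_subset (E := WeakDual ℝ Φ)
      (isCompact_closure_convexHull_image_deltaPhi S)
      (Convex.closure (E := WeakDual ℝ Φ) (convex_convexHull ℝ _)) hChc hChconv hextCh
  exact image_subset_iff.1 (subset_closure.trans' (subset_convexHull ℝ _) |>.trans hD)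

theorem TraceConvexSet.traceCoHull_eq {C : Set K} (hC : TraceConvexSet Φ h1 C) :
    traceCoHull Φ h1 C = C := by
  refine subset_antisymm (sInter_subset_of_mem ?_) fun _ hx => mem_sInter.2 fun _ hA => hA.2 hx
  exact ⟨hC, subset_rfl⟩

theorem traceCoHull_extPhi (hsep : ∀ x y : K, x ≠ y → ∃ φ ∈ Φ, φ x ≠ φ y) {S : Set K}
    (hS : IsCompact S) : traceCoHull Φ h1 S = traceCoHull Φ h1 (ExtPhi Φ S) := by
  refine subset_antisymm (sInter_subset_sInter fun C hC => ⟨hC.1, ?_⟩)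
    (sInter_subset_sInter fun C hC => ⟨hC.1, fun x hx => hC.2 hx.1⟩)
  exact hC.1.subset_of_extPhi_subset hsep hS hC.2

end TraceConvex

theorem stmt9_general {K : Type*} [TopologicalSpace K] [CompactSpace K]
    (Φ : Submodule ℝ C(K, ℝ))
    (hsep : ∀ x y : K, x ≠ y → ∃ φ ∈ Φ, φ x ≠ φ y)
    (hconst : ∀ c : ℝ, ContinuousMap.const K c ∈ Φ)
    (S : Set K) (hS : IsCompact S) :
    traceCoHull Φ (hconst 1) S = traceCoHull Φ (hconst 1) (ExtPhi Φ S) ∧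
    ∀ C : Set K, IsCompact C → TraceConvexSet Φ (hconst 1) C →
      C = traceCoHull Φ (hconst 1) (ExtPhi Φ C) :=
  ⟨traceCoHull_extPhi hsep hS, fun C hCc hC => by
    rw [← traceCoHull_extPhi hsep hCc, hC.traceCoHull_eq]⟩

/-- **Abstract Krein–Milman theorem.** For every compact `S ⊆ K`,
`co_Φ(S) = co_Φ(Ext_Φ(S))`; in particular every compact `Φ`-convex-trace set is the
`Φ`-trace convex hull of its `Φ`-extreme points. -/
theorem stmt9 {K : Type*} [TopologicalSpace K] [CompactSpace K] [T2Space K]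
    (Φ : Submodule ℝ C(K, ℝ)) (hΦclosed : IsClosed (Φ : Set C(K, ℝ)))
    (hsep : ∀ x y : K, x ≠ y → ∃ φ ∈ Φ, φ x ≠ φ y)
    (hconst : ∀ c : ℝ, ContinuousMap.const K c ∈ Φ)
    (S : Set K) (hS : IsCompact S) :
    traceCoHull Φ (hconst 1) S = traceCoHull Φ (hconst 1) (ExtPhi Φ S) ∧
    ∀ C : Set K, IsCompact C → TraceConvexSet Φ (hconst 1) C →
      C = traceCoHull Φ (hconst 1) (ExtPhi Φ C) :=
  stmt9_general Φ hsep hconst S hS
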